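/- arXiv:1412.0179 — 5 statements merged into one kernel-verified Lean document; each statement's English description precedes it below -/
import Mathlib

section
/- If x_1, …, x_m are elements of F_q (q = p^e, p prime) that are linearly independent over F_p, then the m × m Moore-type matrix whose rows are (1,1,…,1), (x_1,…,x_m), (x_1^p,…,x_m^p), …, (x_1^{p^{m-2}},…,x_m^{p^{m-2}}) has nonzero determinant. -/
/-!
Every row of the matrix is `x ↦ x ^ E` with `E ∈ {0, 1, p, …, p^(m-2)}`, so a vanishing
combination of the rows is a nonzero polynomial `P = a₀ + L` of degree `< p^(m-1)`, with `L`
additive and `𝔽_p`-linear, vanishing at every `x_j`. Then `P` also vanishes at every affine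
combination `∑ c_j x_j` (`∑ c_j = 1`, `c_j ∈ 𝔽_p`); by linear independence these are `p^(m-1)`
distinct roots, too many for its degree.
-/

open Matrix Function

def mooreExp (p : ℕ) : ℕ → ℕ
  | 0 => 0
  | k + 1 => p ^ k

theorem pow_mooreExp {M : Type*} [Monoid M] (y : M) (p k : ℕ) :
    y ^ mooreExp p k = if k = 0 then 1 else y ^ p ^ (k - 1) := by
  cases k <;> simp [mooreExp]

theorem mooreExp_injective {p : ℕ} (hp : 2 ≤ p) : Injective (mooreExp p) := by
  have hpos : ∀ k, p ^ k ≠ 0 := fun k => pow_ne_zero k (by omega)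
  rintro (_ | k) (_ | l) h
  · rfl
  · exact absurd h.symm (hpos l)
  · exact absurd h (hpos k)
  · rw [Nat.pow_right_injective hp h]

theorem mooreExp_lt_pow {p : ℕ} (hp : 1 < p) {k n : ℕ} (hk : k ≤ n) : mooreExp p k < p ^ n := by
  cases k with
  | zero => exact Nat.pow_pos (by omega)
  | succ k => exact Nat.pow_lt_pow_right hp (by omega)

theorem Fin.cons_one_sub_sum_injective {R : Type*} [Ring R] (n : ℕ) :
    Injective fun d : Fin n → R => (Fin.cons (1 - ∑ i, d i) d : Fin (n + 1) → R) :=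
  fun _ _ h => (Fin.cons_injective2 h).2

section SparsePoly

open Polynomial

variable {R : Type*} [CommRing R] {ι : Type*} [Fintype ι]

noncomputable def sparsePoly (E : ι → ℕ) (a : ι → R) : R[X] :=
  ∑ i, C (a i) * X ^ E i

theorem coeff_sparsePoly_self {E : ι → ℕ} (hE : Injective E) (a : ι → R) (i : ι) :
    (sparsePoly E a).coeff (E i) = a i := by
  classical
  simp [sparsePoly, hE.eq_iff]

theorem sparsePoly_ne_zero {E : ι → ℕ} (hE : Injective E) {a : ι → R} (ha : a ≠ 0) :
    sparsePoly E a ≠ 0 := by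
  obtain ⟨i, hi⟩ := Function.ne_iff.mp ha
  intro h
  exact hi (by simpa [h] using (coeff_sparsePoly_self hE a i).symm)

theorem natDegree_sparsePoly_lt {E : ι → ℕ} {N : ℕ} (hN : N ≠ 0) (hE : ∀ i, E i < N)
    (a : ι → R) : (sparsePoly E a).natDegree < N :=
  (natDegree_sum_le_of_forall_le _ _ fun i _ =>
    (natDegree_C_mul_X_pow_le _ _).trans (Nat.le_pred_of_lt (hE i))).trans_lt (Nat.pred_lt hN)

theorem vecMul_of_pow_apply (E : ι → ℕ) (a x : ι → R) (j : ι) :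
    (a ᵥ* of fun i j => x j ^ E i) j = (sparsePoly E a).eval (x j) := by
  simp [vecMul, dotProduct, sparsePoly, eval_finsetSum]

end SparsePoly

section CharP

variable {K : Type*} [Field K] {p : ℕ} [Fact p.Prime] [Algebra (ZMod p) K]

theorem sum_smul_pow_char_pow {κ : Type*} (s : Finset κ) (c : κ → ZMod p) (y : κ → K) (k : ℕ) :
    (∑ j ∈ s, c j • y j) ^ p ^ k = ∑ j ∈ s, c j • y j ^ p ^ k := by
  have : CharP K p := charP_of_injective_algebraMap' (ZMod p) p
  simp_rw [sum_pow_char_pow, smul_pow, ZMod.pow_card_pow]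

theorem sum_smul_pow_mooreExp {κ : Type*} [Fintype κ] {c : κ → ZMod p} (hc : ∑ j, c j = 1)
    (y : κ → K) (k : ℕ) : (∑ j, c j • y j) ^ mooreExp p k = ∑ j, c j • y j ^ mooreExp p k := by
  cases k with
  | zero => simp [mooreExp, ← Finset.sum_smul, hc]
  | succ k => exact sum_smul_pow_char_pow _ c y k

open Polynomial

theorem eval_sparsePoly_mooreExp_affineCombination {ι κ : Type*} [Fintype ι] [Fintype κ]
    (e : ι → ℕ) (a : ι → K) {c : κ → ZMod p} (hc : ∑ j, c j = 1) (y : κ → K) :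
    (sparsePoly (fun i => mooreExp p (e i)) a).eval (∑ j, c j • y j) =
      ∑ j, c j • (sparsePoly (fun i => mooreExp p (e i)) a).eval (y j) := by
  simp only [sparsePoly, eval_finsetSum, eval_mul, eval_C, eval_pow, eval_X,
    sum_smul_pow_mooreExp hc, Finset.mul_sum, Finset.smul_sum, mul_smul_comm]
  exact Finset.sum_comm

theorem det_of_pow_mooreExp_ne_zero {n : ℕ} {x : Fin (n + 1) → K}
    (hx : LinearIndependent (ZMod p) x) :
    (of fun i j : Fin (n + 1) => x j ^ mooreExp p i).det ≠ 0 := by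
  have hp : p.Prime := Fact.out
  intro hdet
  obtain ⟨a, ha, hvec⟩ := exists_vecMul_eq_zero_iff.mpr hdet
  have hroots : ∀ j, (sparsePoly (fun i : Fin (n + 1) => mooreExp p i) a).eval (x j) = 0 :=
    fun j => by rw [← vecMul_of_pow_apply, hvec, Pi.zero_apply]
  have hexp : Injective fun i : Fin (n + 1) => mooreExp p i :=
    (mooreExp_injective hp.two_le).comp Fin.val_injective
  refine sparsePoly_ne_zero hexp ha (eq_zero_of_natDegree_lt_card_of_eval_eq_zero _
    (hx.fintypeLinearCombination_injective.comp (Fin.cons_one_sub_sum_injective n))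
    (fun d => ?_) ?_)
  · simp only [Function.comp_apply, Fintype.linearCombination_apply]
    rw [eval_sparsePoly_mooreExp_affineCombination _ _ (by simp [Fin.sum_cons])]
    simp [hroots]
  · simpa [ZMod.card] using
      natDegree_sparsePoly_lt (pow_pos hp.pos n).ne' (fun i => mooreExp_lt_pow hp.one_lt i.is_le) a

end CharP

/-- Moore-type matrix with first row all ones: nonzero determinant for
`F_p`-linearly independent `x_1, …, x_m`. -/
theorem stmt1 (p e m : ℕ) [Fact p.Prime] (x : Fin m → GaloisField p e)
    (hx : LinearIndependent (ZMod p) x) :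
    (Matrix.of fun i j : Fin m =>
        if (i : ℕ) = 0 then 1 else x j ^ p ^ ((i : ℕ) - 1)).det ≠ 0 := by
  obtain _ | n := m
  · simp [Matrix.det_isEmpty]
  · simpa only [pow_mooreExp] using det_of_pow_mooreExp_ne_zero hx
end

section
/- The graph G_q(f_2(x)y, …, f_{m+1}(x)y) is connected if and only if the functions 1, f_2, …, f_{m+1} : F_q → F_q are linearly independent over F_q; more precisely, the number of connected components equals q^{m+1−r}, where r is the F_q-rank of the span of the functions 1, f_2, …, f_{m+1}. -/
/-!
Write `v u = (1, f₂(u), …, f_{m+1}(u))` and `e₁ = Pi.single 0 1`. Adjacency of `P` and `L` says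
`P + L = L₀ • v P₀ + P₀ • e₁`, so through the line `l • v P₀ + P₀ • e₁ - P` the point `P` is
joined to `P + l • (v u - v P₀) + (u - P₀) • e₁`, for all `l, u`. Composing such moves, the
points reachable from `P` form the coset `P + S` with `S = span {v u - v 0 + e₁}`, and every line
has a point neighbour; this identifies the components with `F^{m+1} ⧸ S`. The shear
`x ↦ x + x₀ • (e₁ - v 0)` maps `span {v u}` onto `S`, and `dim span {v u}` is the column rank of
the matrix `(g_k(u))`, i.e. its row rank `r`.
-/
/-- Point `P` is adjacent to line `L` iff `l_k + p_k = f_k(p_1) l_1` for `2 ≤ k ≤ m+1`. -/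
def wengerAdj {F : Type} [Field F] {m : ℕ} (f : Fin m → Polynomial F)
    (P L : Fin (m + 1) → F) : Prop :=
  ∀ k : Fin m, L k.succ + P k.succ = (f k).eval (P 0) * L 0

/-- The bipartite graph `G_q(f_2(x)y, …, f_{m+1}(x)y)` on points ⊕ lines. -/
def wengerGraph (F : Type) [Field F] {m : ℕ} (f : Fin m → Polynomial F) :
    SimpleGraph ((Fin (m + 1) → F) ⊕ (Fin (m + 1) → F)) :=
  SimpleGraph.fromRel fun v w => match v, w with
    | Sum.inl P, Sum.inr L => wengerAdj f P L
    | _, _ => False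

open SimpleGraph Submodule Module

theorem SimpleGraph.connected_iff_natCard_connectedComponent_eq_one {V : Type*}
    (G : SimpleGraph V) : G.Connected ↔ Nat.card G.ConnectedComponent = 1 := by
  rw [Nat.card_eq_one_iff_unique, connected_iff]
  refine and_congr ⟨Preconnected.subsingleton_connectedComponent, fun h v w => ?_⟩
    ⟨fun ⟨v⟩ => ⟨G.connectedComponentMk v⟩, fun ⟨c⟩ => c.ind fun v => ⟨v⟩⟩
  exact ConnectedComponent.exact (Subsingleton.elim _ _)

theorem finrank_span_range_eq_finrank_span_range_swap {K ι κ : Type*} [Field K] [Finite ι]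
    [Fintype κ] (g : ι → κ → K) :
    finrank K (span K (Set.range g)) = finrank K (span K (Set.range fun k i => g i k)) :=
  (Matrix.of g).rank_eq_finrank_span_row.symm.trans (Matrix.of g).rank_eq_finrank_span_cols

namespace wengerGraph

variable {F : Type} [Field F] {m : ℕ} (f : Fin m → Polynomial F)

def evalVec (u : F) : Fin (m + 1) → F := Fin.cons 1 fun k => (f k).eval u

@[simp] lemma evalVec_zero (u : F) : evalVec f u 0 = 1 := rfl
@[simp] lemma evalVec_succ (u : F) (k : Fin m) : evalVec f u k.succ = (f k).eval u := rfl

lemma wengerAdj_iff {P L : Fin (m + 1) → F} :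
    wengerAdj f P L ↔ P + L = L 0 • evalVec f (P 0) + P 0 • Pi.single 0 1 := by
  rw [funext_iff, Fin.forall_fin_succ]
  simp [wengerAdj, add_comm, mul_comm]

lemma adj_inl_inr_iff {P L : Fin (m + 1) → F} :
    (wengerGraph F f).Adj (.inl P) (.inr L) ↔ wengerAdj f P L := by
  simp [wengerGraph]

lemma adj_inl_inr_of_eq {P L : Fin (m + 1) → F}
    (h : P + L = L 0 • evalVec f (P 0) + P 0 • Pi.single 0 1) :
    (wengerGraph F f).Adj (.inl P) (.inr L) :=
  (adj_inl_inr_iff f).2 ((wengerAdj_iff f).2 h)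

lemma reachable_inl_of_eq {P Q : Fin (m + 1) → F} (l u : F)
    (hQ : Q = P + l • (evalVec f u - evalVec f (P 0)) + (u - P 0) • Pi.single 0 1) :
    (wengerGraph F f).Reachable (.inl P) (.inl Q) := by
  set L := l • evalVec f (P 0) + P 0 • Pi.single 0 1 - P
  have hL0 : L 0 = l := by simp [L]
  have hQ0 : Q 0 = u := by simp [hQ]
  have hPL : (wengerGraph F f).Adj (.inl P) (.inr L) :=
    adj_inl_inr_of_eq f (by rw [hL0, add_sub_cancel])
  have hQL : (wengerGraph F f).Adj (.inl Q) (.inr L) :=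
    adj_inl_inr_of_eq f (by rw [hL0, hQ0, hQ]; module)
  exact hPL.reachable.trans hQL.reachable.symm

def componentSubspace : Submodule F (Fin (m + 1) → F) :=
  span F (Set.range fun u => evalVec f u - evalVec f 0 + Pi.single 0 1)

lemma reachable_inl_add_smul (P : Fin (m + 1) → F) (a u : F) :
    (wengerGraph F f).Reachable (.inl P)
      (.inl (P + a • (evalVec f u - evalVec f 0 + Pi.single 0 1))) := by
  set P₁ := P - P 0 • Pi.single 0 1
  set P₂ := P₁ + a • (evalVec f u - evalVec f 0) + u • Pi.single 0 1
  have hP₁ : P₁ 0 = 0 := by simp [P₁]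
  have hP₂ : P₂ 0 = u := by simp [P₂, hP₁]
  refine ((reachable_inl_of_eq (Q := P₁) f 0 0 ?_).trans
    (reachable_inl_of_eq (Q := P₂) f a u ?_)).trans (reachable_inl_of_eq f 0 (P 0 + a) ?_)
  · module
  · rw [hP₁]; module
  · rw [hP₂]; module

lemma reachable_inl_add_of_mem {d : Fin (m + 1) → F} (hd : d ∈ componentSubspace f)
    (P : Fin (m + 1) → F) : (wengerGraph F f).Reachable (.inl P) (.inl (P + d)) := by
  suffices ∀ (a : F) P, (wengerGraph F f).Reachable (.inl P) (.inl (P + a • d)) by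
    simpa using this 1 P
  induction hd using span_induction with
  | mem x hx =>
    obtain ⟨u, rfl⟩ := hx
    exact fun a P => reachable_inl_add_smul f P a u
  | zero => simp
  | add x y _ _ hx hy =>
    intro a P
    simpa [smul_add, add_assoc] using (hx a P).trans (hy a (P + a • x))
  | smul b x _ hx =>
    intro a P
    simpa [smul_smul] using hx (a * b) P

-- A line `L` is adjacent to the point `L 0 • evalVec f 0 - L`.
def componentLabel :
    (Fin (m + 1) → F) ⊕ (Fin (m + 1) → F) → (Fin (m + 1) → F) ⧸ componentSubspace f
  | .inl P => Submodule.Quotient.mk P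
  | .inr L => Submodule.Quotient.mk (L 0 • evalVec f 0 - L)

lemma componentLabel_eq_of_wengerAdj {P L : Fin (m + 1) → F} (h : wengerAdj f P L) :
    componentLabel f (.inl P) = componentLabel f (.inr L) := by
  rw [wengerAdj_iff] at h
  have hsub : P - (L 0 • evalVec f 0 - L) =
      L 0 • (evalVec f (P 0) - evalVec f 0 + Pi.single 0 1) +
        (P 0 - L 0) • (evalVec f 0 - evalVec f 0 + Pi.single 0 1) := by
    rw [show P - (L 0 • evalVec f 0 - L) = P + L - L 0 • evalVec f 0 by abel, h]
    module
  refine (Submodule.Quotient.eq _).2 ?_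
  rw [hsub]
  exact add_mem (smul_mem _ _ (subset_span ⟨_, rfl⟩)) (smul_mem _ _ (subset_span ⟨_, rfl⟩))

lemma componentLabel_eq_of_adj {v w : (Fin (m + 1) → F) ⊕ (Fin (m + 1) → F)}
    (h : (wengerGraph F f).Adj v w) : componentLabel f v = componentLabel f w := by
  rcases v with P | L <;> rcases w with Q | M <;>
    simp only [wengerGraph, fromRel_adj, ne_eq, Sum.inl.injEq, Sum.inr.injEq, reduceCtorEq,
      not_false_eq_true, or_self, or_false, false_or, and_false, true_and] at h
  · exact componentLabel_eq_of_wengerAdj f h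
  · exact (componentLabel_eq_of_wengerAdj f h).symm

lemma componentLabel_eq_of_reachable {v w : (Fin (m + 1) → F) ⊕ (Fin (m + 1) → F)}
    (h : (wengerGraph F f).Reachable v w) : componentLabel f v = componentLabel f w := by
  obtain ⟨p⟩ := h
  induction p with
  | nil => rfl
  | cons h _ ih => exact (componentLabel_eq_of_adj f h).trans ih

lemma exists_reachable_inl (v : (Fin (m + 1) → F) ⊕ (Fin (m + 1) → F)) :
    ∃ P, (wengerGraph F f).Reachable v (.inl P) ∧
      componentLabel f v = Submodule.Quotient.mk P := by
  rcases v with P | L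
  · exact ⟨P, .rfl, rfl⟩
  · refine ⟨L 0 • evalVec f 0 - L, (adj_inl_inr_of_eq f ?_).reachable.symm, rfl⟩
    simp only [Pi.sub_apply, Pi.smul_apply, evalVec_zero, smul_eq_mul, mul_one, sub_self,
      zero_smul, add_zero]
    abel

noncomputable def componentEquiv :
    (wengerGraph F f).ConnectedComponent ≃ (Fin (m + 1) → F) ⧸ componentSubspace f := by
  refine .ofBijective (ConnectedComponent.lift (componentLabel f)
    fun _ _ p _ => componentLabel_eq_of_reachable f p.reachable) ⟨fun C C' => ?_, fun x => ?_⟩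
  · refine ConnectedComponent.ind₂ (fun v w h => ConnectedComponent.sound ?_) C C'
    obtain ⟨P, hvP, hv⟩ := exists_reachable_inl f v
    obtain ⟨Q, hwQ, hw⟩ := exists_reachable_inl f w
    have hPQ : Q - P ∈ componentSubspace f := by
      rw [← Submodule.Quotient.eq, ← hv, ← hw]
      exact h.symm
    have hPQ' := reachable_inl_add_of_mem f hPQ P
    rw [add_sub_cancel] at hPQ'
    exact hvP.trans (hPQ'.trans hwQ.symm)
  · obtain ⟨P, rfl⟩ := Submodule.Quotient.mk_surjective _ x
    exact ⟨(wengerGraph F f).connectedComponentMk (.inl P), rfl⟩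

lemma finrank_componentSubspace :
    finrank F (componentSubspace f) = finrank F (span F (Set.range (evalVec f))) := by
  let A : (Fin (m + 1) → F) →ₗ[F] Fin (m + 1) → F :=
    LinearMap.id + (LinearMap.proj 0).smulRight (Pi.single 0 1 - evalVec f 0)
  have hA : Function.Injective A := by
    rw [← LinearMap.ker_eq_bot, eq_bot_iff]
    intro x hx
    have hx0 : x 0 = 0 := by simpa [A] using congr_fun hx 0
    simpa [A, hx0] using hx
  have hAv : ∀ u, A (evalVec f u) = evalVec f u - evalVec f 0 + Pi.single 0 1 := by
    intro u
    simp only [A, LinearMap.add_apply, LinearMap.id_apply, LinearMap.smulRight_apply,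
      LinearMap.proj_apply, evalVec_zero, one_smul]
    abel
  have hmap : componentSubspace f = (span F (Set.range (evalVec f))).map A := by
    rw [Submodule.map_span, ← Set.range_comp, componentSubspace]
    simp only [Function.comp_def, hAv]
  rw [hmap]
  exact (LinearEquiv.finrank_eq (Submodule.equivMapOfInjective A hA _)).symm

end wengerGraph

open wengerGraph in
theorem stmt6_general (q m : ℕ) (F : Type) [Field F] [Fintype F]
    (hq : Fintype.card F = q) (f : Fin m → Polynomial F)
    (g : Fin (m + 1) → (F → F))
    (hg : g = Fin.cases (fun _ => 1) fun k u => (f k).eval u) :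
    Nat.card (wengerGraph F f).ConnectedComponent =
      q ^ (m + 1 - Module.finrank F (Submodule.span F (Set.range g))) ∧
    ((wengerGraph F f).Connected ↔ LinearIndependent F g) := by
  have hrank : finrank F (componentSubspace f) = finrank F (span F (Set.range g)) := by
    have hg' : evalVec f = fun u i => g i u := by
      subst hg
      funext u i
      cases i using Fin.cases <;> rfl
    rw [finrank_componentSubspace, finrank_span_range_eq_finrank_span_range_swap g, hg']
  have hcard : Nat.card (wengerGraph F f).ConnectedComponent =
      q ^ (m + 1 - finrank F (span F (Set.range g))) := by
    rw [Nat.card_congr (componentEquiv f), natCard_eq_pow_finrank (K := F),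
      Submodule.finrank_quotient (R := F), finrank_fin_fun, hrank, Nat.card_eq_fintype_card, hq]
  refine ⟨hcard, ?_⟩
  have hle : finrank F (span F (Set.range g)) ≤ m + 1 :=
    (finrank_range_le_card g).trans_eq (Fintype.card_fin _)
  have hq1 : q ≠ 1 := by rw [← hq]; exact Fintype.one_lt_card.ne'
  rw [connected_iff_natCard_connectedComponent_eq_one, hcard, Nat.pow_eq_one,
    linearIndependent_iff_card_eq_finrank_span, Set.finrank, Fintype.card_fin]
  omega

/-- The number of connected components of `G_q(f_2(x)y, …, f_{m+1}(x)y)` is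
`q^{m+1-r}` where `r` is the `F_q`-rank of `1, f_2, …, f_{m+1}` as functions; in
particular the graph is connected iff `1, f_2, …, f_{m+1}` are `F_q`-linearly
independent. -/
theorem stmt6 (q m : ℕ) (hm : 1 ≤ m) (F : Type) [Field F] [Fintype F]
    (hq : Fintype.card F = q) (f : Fin m → Polynomial F)
    (g : Fin (m + 1) → (F → F))
    (hg : g = Fin.cases (fun _ => 1) fun k u => (f k).eval u) :
    Nat.card (wengerGraph F f).ConnectedComponent =
      q ^ (m + 1 - Module.finrank F (Submodule.span F (Set.range g))) ∧
    ((wengerGraph F f).Connected ↔ LinearIndependent F g) :=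
  stmt6_general q m F hq f g hg
end

section
/- For q = p^e and m ≥ e, the number of tuples (w_2,…,w_{m+1}) ∈ F_q^m such that the F_p-linear map x ↦ w_2 x + w_3 x^p + ⋯ + w_{m+1} x^{p^{m-1}} on F_q has kernel of F_p-dimension exactly i equals q^{m−e} · (∏_{j=0}^{e−i−1} (p^e − p^j)^2) / (∏_{j=0}^{e−i−1} (p^{e−i} − p^j)). -/
open LinearMap Submodule Module

/-- Generic fibration equivalence. -/
def sigmaFiberSubtypeEquiv {α β : Type*} (q : α → β) (P : β → Prop) :
    (Σ b : {b // P b}, {a // q a = b.1}) ≃ {a // P (q a)} where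
  toFun x := ⟨x.2.1, by rw [x.2.2]; exact x.1.2⟩
  invFun a := ⟨⟨q a.1, a.2⟩, a.1, rfl⟩
  left_inv := by rintro ⟨⟨b, hb⟩, a, ha⟩; cases ha; rfl
  right_inv a := rfl

variable {K V U : Type*} [Field K] [AddCommGroup V] [Module K V] [AddCommGroup U] [Module K U]

/-- Maps with given kernel correspond to injective maps from the quotient. -/
noncomputable def kerFiberEquiv (W : Submodule K V) :
    {f : V →ₗ[K] V // LinearMap.ker f = W} ≃ {g : (V ⧸ W) →ₗ[K] V // Function.Injective g} where
  toFun f := ⟨W.liftQ f.1 f.2.ge, by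
    rw [← LinearMap.ker_eq_bot, Submodule.ker_liftQ, f.2, Submodule.mkQ_map_self]⟩
  invFun g := ⟨g.1 ∘ₗ W.mkQ, by
    rw [LinearMap.ker_comp, LinearMap.ker_eq_bot.2 g.2, Submodule.comap_bot, Submodule.ker_mkQ]⟩
  left_inv f := Subtype.ext (W.liftQ_mkQ f.1 f.2.ge)
  right_inv g := Subtype.ext (W.linearMap_qext rfl)

/-- Injective maps correspond to linearly independent tuples. -/
noncomputable def injEquivLinearIndependent {r : ℕ} (b : Basis (Fin r) K U) :
    {g : U →ₗ[K] V // Function.Injective g} ≃ {s : Fin r → V // LinearIndependent K s} where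
  toFun g := ⟨g.1 ∘ b, b.linearIndependent.map' g.1 (LinearMap.ker_eq_bot.2 g.2)⟩
  invFun s := ⟨b.constr K s.1, by
    rw [← LinearMap.ker_eq_bot, LinearMap.ker_eq_bot']
    intro x hx
    rw [b.constr_apply] at hx
    have := linearIndependent_iff.1 s.2 (b.repr x) (by
      rwa [Finsupp.linearCombination_apply])
    exact b.repr.map_eq_zero_iff.1 this⟩
  left_inv g := Subtype.ext (b.ext fun i => b.constr_basis K _ i)
  right_inv s := Subtype.ext (funext fun i => b.constr_basis K _ i)

section Counting

attribute [local instance] Fintype.ofFinite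

variable (K : Type*) {V : Type*} [Field K] [Fintype K] [AddCommGroup V] [Module K V] [Finite V]

local notation "q" => Fintype.card K
local notation "n" => Module.finrank K V

instance : Finite (Submodule K V) :=
  Finite.of_injective (fun W => (W : Set V)) SetLike.coe_injective

/-- Fiber of the span map over a subspace of dimension `r`. -/
noncomputable def fiberSpanEquiv (r : ℕ) (W : Submodule K V) (hW : Module.finrank K W = r) :
    {s : {s : Fin r → V // LinearIndependent K s} // Submodule.span K (Set.range s.1) = W} ≃
      {t : Fin r → W // LinearIndependent K t} where
  toFun s := ⟨fun j => ⟨s.1.1 j, by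
      have h := Submodule.subset_span (R := K) (M := V) (Set.mem_range_self (f := s.1.1) j)
      rw [s.2] at h; exact h⟩,
    LinearIndependent.of_comp W.subtype (by exact s.1.2)⟩
  invFun t := ⟨⟨fun j => (t.1 j : V), by
      exact t.2.map' W.subtype (Submodule.ker_subtype W)⟩, by
    have hli : LinearIndependent K (fun j => (t.1 j : V)) :=
      t.2.map' W.subtype (Submodule.ker_subtype W)
    refine (Submodule.eq_of_le_of_finrank_le ?_ ?_)
    · rw [Submodule.span_le]
      rintro x ⟨j, rfl⟩
      exact (t.1 j).2
    · rw [hW, finrank_span_eq_card hli, Fintype.card_fin]⟩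
  left_inv s := by ext j; rfl
  right_inv t := by ext j; rfl

theorem card_inj_maps {U : Type*} [AddCommGroup U] [Module K U] [Module.Finite K U]
    (hU : Module.finrank K U ≤ n) :
    Nat.card {g : U →ₗ[K] V // Function.Injective g} =
      ∏ j ∈ Finset.range (Module.finrank K U), (q ^ n - q ^ j) := by
  rw [Nat.card_congr (injEquivLinearIndependent (Module.finBasis K U)),
    card_linearIndependent (K := K) (V := V) hU]
  exact Fin.prod_univ_eq_prod_range (fun j => q ^ n - q ^ j) (Module.finrank K U)

theorem card_grassmannian_mul (r : ℕ) (hr : r ≤ n) :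
    Nat.card {W : Submodule K V // Module.finrank K W = r} * ∏ j ∈ Finset.range r, (q ^ r - q ^ j)
      = ∏ j ∈ Finset.range r, (q ^ n - q ^ j) := by
  classical
  have h0 : Nat.card {s : Fin r → V // LinearIndependent K s} =
      Nat.card {a : {s : Fin r → V // LinearIndependent K s} //
        Module.finrank K (Submodule.span K (Set.range a.1)) = r} :=
    Nat.card_congr (Equiv.subtypeUnivEquiv (fun s => by
      rw [finrank_span_eq_card s.2, Fintype.card_fin])).symm
  have h1 : Nat.card {a : {s : Fin r → V // LinearIndependent K s} //
        Module.finrank K (Submodule.span K (Set.range a.1)) = r} =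
      Nat.card (Σ W : {W : Submodule K V // Module.finrank K W = r},
        {s : {s : Fin r → V // LinearIndependent K s} //
          Submodule.span K (Set.range s.1) = W.1}) :=
    Nat.card_congr (sigmaFiberSubtypeEquiv
      (fun s : {s : Fin r → V // LinearIndependent K s} => Submodule.span K (Set.range s.1))
      (fun W => Module.finrank K W = r)).symm
  have h2 : Nat.card (Σ W : {W : Submodule K V // Module.finrank K W = r},
        {s : {s : Fin r → V // LinearIndependent K s} //
          Submodule.span K (Set.range s.1) = W.1}) =
      Nat.card {W : Submodule K V // Module.finrank K W = r} *
        ∏ j ∈ Finset.range r, (q ^ r - q ^ j) := by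
    rw [Nat.card_eq_fintype_card, Fintype.card_sigma]
    have hfib : ∀ W : {W : Submodule K V // Module.finrank K W = r},
        Fintype.card {s : {s : Fin r → V // LinearIndependent K s} //
            Submodule.span K (Set.range s.1) = W.1} =
          ∏ j ∈ Finset.range r, (q ^ r - q ^ j) := by
      intro W
      rw [← Nat.card_eq_fintype_card, Nat.card_congr (fiberSpanEquiv K r W.1 W.2)]
      rw [card_linearIndependent (K := K) (V := W.1) (k := r) (le_of_eq W.2.symm), W.2]
      exact Fin.prod_univ_eq_prod_range (fun j => q ^ r - q ^ j) r
    rw [Finset.sum_congr rfl (fun W _ => hfib W), Finset.sum_const, Finset.card_univ,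
      ← Nat.card_eq_fintype_card, smul_eq_mul]
  have h3 : Nat.card {s : Fin r → V // LinearIndependent K s} =
      ∏ j ∈ Finset.range r, (q ^ n - q ^ j) := by
    rw [card_linearIndependent (K := K) (V := V) (k := r) hr]
    exact Fin.prod_univ_eq_prod_range (fun j => q ^ n - q ^ j) r
  rw [← h2, ← h1, ← h0, h3]

end Counting

section Dual

open Module

variable {K V : Type*} [Field K] [AddCommGroup V] [Module K V] [FiniteDimensional K V]

theorem finrank_add_finrank_dualAnnihilator'' (W : Submodule K V) :
    finrank K W + finrank K W.dualAnnihilator = finrank K V := by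
  have e := Subspace.quotEquivAnnihilator (K := K) (V := V) W
  have h1 : finrank K (V ⧸ W) = finrank K W.dualAnnihilator := LinearEquiv.finrank_eq e
  have h2 := Submodule.finrank_quotient_add_finrank W
  omega

noncomputable def grassDualEquiv (i : ℕ) (hi : i ≤ finrank K V) :
    {W : Submodule K V // finrank K W = i} ≃
      {W : Submodule K (Dual K V) // finrank K W = finrank K V - i} where
  toFun W := ⟨W.1.dualAnnihilator, by
    have h := finrank_add_finrank_dualAnnihilator'' W.1
    have h2 := W.2
    omega⟩
  invFun W := ⟨W.1.dualCoannihilator, by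
    have h := Subspace.finrank_add_finrank_dualCoannihilator_eq W.1
    have h2 := W.2
    omega⟩
  left_inv W := Subtype.ext Subspace.dualAnnihilator_dualCoannihilator_eq
  right_inv W := Subtype.ext Subspace.dualCoannihilator_dualAnnihilator_eq

theorem card_grass_dual (i : ℕ) (hi : i ≤ finrank K V) :
    Nat.card {W : Submodule K V // finrank K W = i} =
      Nat.card {W : Submodule K V // finrank K W = finrank K V - i} := by
  rw [Nat.card_congr (grassDualEquiv i hi)]
  have hd : finrank K (Dual K V) = finrank K V := Subspace.dual_finrank_eq
  obtain ⟨e⟩ := FiniteDimensional.nonempty_linearEquiv_of_finrank_eq hd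
  exact Nat.card_congr ((Submodule.orderIsoMapComap e).toEquiv.subtypeEquiv fun W => by
    have h : finrank K ((Submodule.orderIsoMapComap e).toEquiv W) = finrank K W :=
      LinearEquiv.finrank_map_eq e W
    rw [h])

end Dual

section Maps

attribute [local instance] Fintype.ofFinite

open Module

variable (K : Type*) {V : Type*} [Field K] [Fintype K] [AddCommGroup V] [Module K V] [Finite V]

local notation "q" => Fintype.card K
local notation "n" => Module.finrank K V

instance {U W : Type*} [AddCommGroup U] [Module K U] [Finite U] [AddCommGroup W] [Module K W] [Finite W] :
    Finite (U →ₗ[K] W) :=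
  Finite.of_injective (fun f => (f : U → W)) DFunLike.coe_injective

theorem card_ker_maps (i : ℕ) (hi : i ≤ n) :
    Nat.card {f : V →ₗ[K] V // finrank K (LinearMap.ker f) = i} =
      Nat.card {W : Submodule K V // finrank K W = i} *
        ∏ j ∈ Finset.range (n - i), (q ^ n - q ^ j) := by
  classical
  rw [← Nat.card_congr (sigmaFiberSubtypeEquiv (fun f : V →ₗ[K] V => LinearMap.ker f)
    (fun W => finrank K W = i))]
  rw [Nat.card_eq_fintype_card, Fintype.card_sigma]
  have hfib : ∀ W : {W : Submodule K V // finrank K W = i},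
      Fintype.card {f : V →ₗ[K] V // LinearMap.ker f = W.1} =
        ∏ j ∈ Finset.range (n - i), (q ^ n - q ^ j) := by
    intro W
    have hq : finrank K (V ⧸ W.1) = n - i := by
      have h2 := Submodule.finrank_quotient_add_finrank W.1
      have h3 := W.2
      omega
    rw [← Nat.card_eq_fintype_card, Nat.card_congr (kerFiberEquiv W.1),
      card_inj_maps K (by rw [hq]; exact Nat.sub_le _ _), hq]
  rw [Finset.sum_congr rfl (fun W _ => hfib W), Finset.sum_const, Finset.card_univ,
    ← Nat.card_eq_fintype_card, smul_eq_mul]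

theorem card_ker_maps_mul (i : ℕ) (hi : i ≤ n) :
    Nat.card {f : V →ₗ[K] V // finrank K (LinearMap.ker f) = i} *
        ∏ j ∈ Finset.range (n - i), (q ^ (n - i) - q ^ j) =
      (∏ j ∈ Finset.range (n - i), (q ^ n - q ^ j)) ^ 2 := by
  rw [card_ker_maps K i hi, card_grass_dual i hi, mul_right_comm,
    card_grassmannian_mul K (n - i) (Nat.sub_le _ _), sq]

end Maps

section Split

variable {K M N : Type*} [Field K] [AddCommGroup M] [Module K M]
  [AddCommGroup N] [Module K N]

noncomputable def splitEquiv (Φ : M →ₗ[K] N) (hs : Function.Surjective Φ) :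
    M ≃ N × LinearMap.ker Φ :=
  let g := (Φ.exists_rightInverse_of_surjective (LinearMap.range_eq_top.2 hs)).choose
  have hg : Φ ∘ₗ g = LinearMap.id :=
    (Φ.exists_rightInverse_of_surjective (LinearMap.range_eq_top.2 hs)).choose_spec
  have hg' : ∀ x, Φ (g x) = x := fun x => by
    have := LinearMap.congr_fun hg x
    simpa using this
  { toFun := fun w => (Φ w, ⟨w - g (Φ w), by simp [LinearMap.mem_ker, map_sub, hg']⟩)
    invFun := fun x => g x.1 + x.2.1
    left_inv := fun w => by simp
    right_inv := fun x => by
      obtain ⟨f, v, hv⟩ := x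
      have hv0 : Φ v = 0 := hv
      refine Prod.ext (by simp [hv0, hg']) (Subtype.ext ?_)
      simp [hv0, hg'] }

theorem splitEquiv_fst (Φ : M →ₗ[K] N) (hs : Function.Surjective Φ) (w : M) :
    ((splitEquiv Φ hs) w).1 = Φ w := by
  simp [splitEquiv]

theorem card_subtype_comp (Φ : M →ₗ[K] N) (hs : Function.Surjective Φ) (P : N → Prop) :
    Nat.card {w : M // P (Φ w)} =
      Nat.card {f : N // P f} * Nat.card (LinearMap.ker Φ) := by
  rw [Nat.card_congr ((splitEquiv Φ hs).subtypeEquiv (p := fun w => P (Φ w))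
      (q := fun x => P x.1) (fun w => by
        show P (Φ w) ↔ P ((splitEquiv Φ hs) w).1
        rw [splitEquiv_fst])),
    Nat.card_congr (Equiv.prodSubtypeFstEquivSubtypeProd (p := P)), Nat.card_prod]

theorem card_ker_mul (Φ : M →ₗ[K] N) (hs : Function.Surjective Φ) :
    Nat.card N * Nat.card (LinearMap.ker Φ) = Nat.card M := by
  rw [← Nat.card_prod]
  exact (Nat.card_congr (splitEquiv Φ hs)).symm

end Split

section Galois

attribute [local instance] Fintype.ofFinite

variable (p : ℕ) [Fact p.Prime] (e : ℕ)

local notation "F" => GaloisField p e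

theorem zmod_pow_ppow (c : ZMod p) (k : ℕ) : c ^ p ^ k = c := by
  have : c ^ (Fintype.card (ZMod p)) ^ k = c := FiniteField.pow_card_pow k c
  rwa [ZMod.card] at this

/-- The linearized polynomial map. -/
noncomputable def phiMap (m : ℕ) :
    (Fin m → F) →ₗ[F] (F →ₗ[ZMod p] F) where
  toFun w :=
    { toFun := fun u => ∑ k : Fin m, w k * u ^ p ^ (k : ℕ)
      map_add' := fun u v => by
        simp_rw [add_pow_char_pow, mul_add, Finset.sum_add_distrib]
      map_smul' := fun c u => by
        simp only [RingHom.id_apply]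
        rw [Finset.smul_sum]
        refine Finset.sum_congr rfl fun k _ => ?_
        rw [Algebra.smul_def, Algebra.smul_def, mul_pow, ← map_pow, zmod_pow_ppow]
        ring }
  map_add' := fun w w' => by
    ext u
    simp only [LinearMap.coe_mk, AddHom.coe_mk, Pi.add_apply, LinearMap.add_apply]
    simp_rw [add_mul, Finset.sum_add_distrib]
  map_smul' := fun c w => by
    ext u
    simp only [LinearMap.coe_mk, AddHom.coe_mk, Pi.smul_apply, RingHom.id_apply,
      LinearMap.smul_apply, smul_eq_mul, Finset.mul_sum]
    simp_rw [mul_assoc]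

theorem phiMap_apply (m : ℕ) (w : Fin m → F) (u : F) :
    phiMap p e m w u = ∑ k : Fin m, w k * u ^ p ^ (k : ℕ) := rfl

theorem card_galois (he : e ≠ 0) : Fintype.card F = p ^ e := by
  rw [← Nat.card_eq_fintype_card, GaloisField.card p e he]

theorem phi_inj (he : e ≠ 0) : Function.Injective (phiMap p e e) := by
  rw [← LinearMap.ker_eq_bot]
  refine (Submodule.eq_bot_iff _).2 fun w hw => ?_
  have hw0 : phiMap p e e w = 0 := hw
  set P : Polynomial F := ∑ k : Fin e, Polynomial.C (w k) * Polynomial.X ^ p ^ (k : ℕ) with hP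
  have heval : ∀ u : F, P.eval u = 0 := fun u => by
    have h1 : (phiMap p e e w) u = 0 := by rw [hw0]; rfl
    rw [phiMap_apply] at h1
    rw [hP, Polynomial.eval_finset_sum]
    simpa using h1
  have hdeg : P.natDegree < Fintype.card F := by
    rw [card_galois p e he]
    refine lt_of_le_of_lt (Polynomial.natDegree_sum_le_of_forall_le _ _ fun k _ => ?_)
      (Nat.pow_lt_pow_right (Fact.out : p.Prime).one_lt (Nat.sub_lt (Nat.pos_of_ne_zero he) one_pos))
    refine le_trans (Polynomial.natDegree_C_mul_le _ _) ?_
    rw [Polynomial.natDegree_X_pow]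
    exact Nat.pow_le_pow_right (Fact.out : p.Prime).one_lt.le (Nat.le_sub_one_of_lt k.2)
  have hP0 : P = 0 :=
    Polynomial.eq_zero_of_natDegree_lt_card_of_eval_eq_zero P Function.injective_id
      (fun u => heval u) hdeg
  funext j
  have hc : P.coeff (p ^ (j : ℕ)) = w j := by
    rw [hP, Polynomial.finset_sum_coeff]
    rw [Finset.sum_eq_single j]
    · simp
    · intro k _ hkj
      rw [Polynomial.coeff_C_mul, Polynomial.coeff_X_pow, if_neg, mul_zero]
      exact fun h => hkj (Fin.ext (Nat.pow_right_injective (Fact.out : p.Prime).two_le h.symm))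
    · simp
  rw [← hc, hP0]
  simp

theorem card_end (he : e ≠ 0) :
    Nat.card (F →ₗ[ZMod p] F) = p ^ (e * e) := by
  rw [Nat.card_eq_fintype_card, card_eq_pow_finrank (K := ZMod p), ZMod.card,
    Module.finrank_linearMap, GaloisField.finrank p he]

theorem phi_surj (he : e ≠ 0) {m : ℕ} (hm : e ≤ m) :
    Function.Surjective (phiMap p e m) := by
  have hcard : Nat.card (Fin e → F) = Nat.card (F →ₗ[ZMod p] F) := by
    rw [card_end p e he, Nat.card_fun, Nat.card_eq_fintype_card (α := Fin e),
      Fintype.card_fin, GaloisField.card p e he, ← pow_mul]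
  have hbij : Function.Bijective (phiMap p e e) :=
    (Nat.bijective_iff_injective_and_card _).2 ⟨phi_inj p e he, hcard⟩
  intro f
  obtain ⟨v, hv⟩ := hbij.2 f
  refine ⟨fun k => if h : (k : ℕ) < e then v ⟨k, h⟩ else 0, ?_⟩
  ext u
  rw [phiMap_apply, ← hv, phiMap_apply]
  have h1 : ∑ k : Fin m, (if h : (k : ℕ) < e then v ⟨k, h⟩ else 0) * u ^ p ^ (k : ℕ) =
      ∑ k ∈ Finset.range m, (if h : k < e then v ⟨k, h⟩ else 0) * u ^ p ^ k :=
    Fin.sum_univ_eq_sum_range (fun k => (if h : k < e then v ⟨k, h⟩ else 0) * u ^ p ^ k) m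
  have h2 : ∑ k : Fin e, v k * u ^ p ^ (k : ℕ) =
      ∑ k ∈ Finset.range e, (if h : k < e then v ⟨k, h⟩ else 0) * u ^ p ^ k := by
    rw [← Fin.sum_univ_eq_sum_range (fun k => (if h : k < e then v ⟨k, h⟩ else 0) * u ^ p ^ k) e]
    refine Finset.sum_congr rfl fun k _ => ?_
    rw [dif_pos k.2, Fin.eta]
  rw [h1, h2]
  refine (Finset.sum_subset (Finset.range_subset_range.2 hm) fun k _ hk => ?_).symm
  rw [dif_neg (by simpa using hk), zero_mul]

end Galois

/-- The number of tuples `(w_2,…,w_{m+1}) ∈ F_q^m` whose associated linearized map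
`x ↦ ∑ w_{k+2} x^{p^k}` has kernel of `F_p`-dimension exactly `i` (equivalently, kernel
of size `p^i`) is `q^{m-e} ∏_{j<e-i}(p^e-p^j)^2 / ∏_{j<e-i}(p^{e-i}-p^j)`. -/
theorem stmt8 (p e m i : ℕ) [Fact p.Prime] (he : 1 ≤ e) (hm : e ≤ m) (hi : i ≤ e) :
    (Nat.card {w : Fin m → GaloisField p e //
        Nat.card {u : GaloisField p e // ∑ k : Fin m, w k * u ^ p ^ (k : ℕ) = 0} = p ^ i} : ℚ) =
      ((p : ℚ) ^ e) ^ (m - e) *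
        (∏ j ∈ Finset.range (e - i), ((p : ℚ) ^ e - p ^ j) ^ 2) /
        (∏ j ∈ Finset.range (e - i), ((p : ℚ) ^ (e - i) - p ^ j)) := by
  classical
  have hp : p.Prime := Fact.out
  have he0 : e ≠ 0 := by omega
  have hfr : Module.finrank (ZMod p) (GaloisField p e) = e := GaloisField.finrank p he0
  have hcK : Fintype.card (ZMod p) = p := ZMod.card p
  -- Step 1
  have hstep1 : Nat.card {w : Fin m → GaloisField p e //
      Nat.card {u : GaloisField p e // ∑ k : Fin m, w k * u ^ p ^ (k : ℕ) = 0} = p ^ i} =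
      Nat.card {f : GaloisField p e →ₗ[ZMod p] GaloisField p e //
        Nat.card {u : GaloisField p e // f u = 0} = p ^ i} *
        Nat.card (LinearMap.ker (phiMap p e m)) := by
    rw [← card_subtype_comp (phiMap p e m) (phi_surj p e he0 hm)
      (fun f => Nat.card {u : GaloisField p e // f u = 0} = p ^ i)]
    exact Nat.card_congr (Equiv.subtypeEquivRight fun w => Iff.rfl)
  -- Step 2
  have hker : Nat.card (LinearMap.ker (phiMap p e m)) = p ^ (e * (m - e)) := by
    have h1 := card_ker_mul (phiMap p e m) (phi_surj p e he0 hm)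
    rw [card_end p e he0, Nat.card_fun, Nat.card_eq_fintype_card (α := Fin m),
      Fintype.card_fin, GaloisField.card p e he0, ← pow_mul] at h1
    have h2 : e * e + e * (m - e) = e * m := by
      rw [← Nat.mul_add, Nat.add_sub_cancel' hm]
    have h3 : p ^ (e * e) * Nat.card (LinearMap.ker (phiMap p e m)) =
        p ^ (e * e) * p ^ (e * (m - e)) := by
      rw [h1, ← pow_add, h2, Nat.mul_comm e m]
    exact Nat.eq_of_mul_eq_mul_left (pow_pos hp.pos _) h3
  -- Step 3
  have hstep3 : Nat.card {f : GaloisField p e →ₗ[ZMod p] GaloisField p e //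
        Nat.card {u : GaloisField p e // f u = 0} = p ^ i} =
      Nat.card {f : GaloisField p e →ₗ[ZMod p] GaloisField p e //
        Module.finrank (ZMod p) (LinearMap.ker f) = i} := by
    refine Nat.card_congr (Equiv.subtypeEquivRight fun f => ?_)
    have h1 : Nat.card {u : GaloisField p e // f u = 0} =
        p ^ Module.finrank (ZMod p) (LinearMap.ker f) := by
      have h0 : Nat.card {u : GaloisField p e // f u = 0} = Nat.card (LinearMap.ker f) :=
        Nat.card_congr (Equiv.subtypeEquivRight fun u => (LinearMap.mem_ker).symm)
      letI : Fintype (LinearMap.ker f) := Fintype.ofFinite _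
      rw [h0, Nat.card_eq_fintype_card, card_eq_pow_finrank (K := ZMod p), hcK]
    rw [h1]
    exact ⟨fun h => Nat.pow_right_injective hp.two_le h, fun h => by rw [h]⟩
  -- Step 4
  have hmain := card_ker_maps_mul (ZMod p) (V := GaloisField p e) i (by rw [hfr]; exact hi)
  rw [hfr, hcK] at hmain
  -- Step 5: assemble
  set r := e - i with hr
  set A := ∏ j ∈ Finset.range r, (p ^ e - p ^ j) with hA
  set B := ∏ j ∈ Finset.range r, (p ^ r - p ^ j) with hB
  clear_value r A B
  have hAc : (A : ℚ) = ∏ j ∈ Finset.range r, ((p : ℚ) ^ e - p ^ j) := by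
    rw [hA, Nat.cast_prod]
    refine Finset.prod_congr rfl fun j hj => ?_
    have hj' : j ≤ e :=
      le_trans (Nat.le_of_lt (Finset.mem_range.1 hj)) (le_trans (le_of_eq hr) (Nat.sub_le e i))
    rw [Nat.cast_sub (Nat.pow_le_pow_right hp.pos hj')]
    push_cast
    ring
  have hBc : (B : ℚ) = ∏ j ∈ Finset.range r, ((p : ℚ) ^ r - p ^ j) := by
    rw [hB, Nat.cast_prod]
    refine Finset.prod_congr rfl fun j hj => ?_
    have hj' : j ≤ r := Nat.le_of_lt (Finset.mem_range.1 hj)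
    rw [Nat.cast_sub (Nat.pow_le_pow_right hp.pos hj')]
    push_cast
    ring
  have hBpos : 0 < B := by
    rw [hB]
    refine Finset.prod_pos fun j hj => ?_
    have h6 : p ^ j < p ^ r := Nat.pow_lt_pow_right hp.one_lt (Finset.mem_range.1 hj)
    exact Nat.sub_pos_of_lt h6
  have hBne : ((B : ℚ)) ≠ 0 := by
    exact_mod_cast hBpos.ne'
  set N := Nat.card {f : GaloisField p e →ₗ[ZMod p] GaloisField p e //
    Module.finrank (ZMod p) (LinearMap.ker f) = i} with hN
  have hQ : (N : ℚ) * (B : ℚ) = (A : ℚ) ^ 2 := by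
    exact_mod_cast congrArg (Nat.cast (R := ℚ)) hmain
  rw [hstep1, hstep3, hker]
  rw [← hBc]
  rw [eq_div_iff hBne]
  have hsq : ∏ j ∈ Finset.range r, ((p : ℚ) ^ e - p ^ j) ^ 2 =
      (∏ j ∈ Finset.range r, ((p : ℚ) ^ e - p ^ j)) ^ 2 := by
    rw [← Finset.prod_pow]
  rw [hsq, ← hAc]
  push_cast
  have hpe : ((p : ℚ) ^ e) ^ (m - e) = (p : ℚ) ^ (e * (m - e)) := by
    rw [← pow_mul]
  rw [hpe]
  linear_combination ((p : ℚ) ^ (e * (m - e))) * hQ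
end

section
/- For m ≥ e, the number of w = (w_1,…,w_{m+1}) ∈ F_q^{m+1} such that F_w(x) = w_1 + w_2 x + w_3 x^p + ⋯ + w_{m+1} x^{p^{m-1}} has no root in F_q equals q^{m−e} · ∑_{i=1}^{e} (p^e − p^{e−i}) · (∏_{j=0}^{e−i−1} (p^e − p^j)^2) / (∏_{j=0}^{e−i−1} (p^{e−i} − p^j)). -/
/-!
Write `q = p ^ e` and `K = 𝔽_q`. Splitting off the constant coefficient, `F_w` has no root iff
`-w₁` lies outside the image of the `𝔽_p`-linear map `φ_t : u ↦ ∑ tₖ u ^ p ^ k`,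
`t = (w₂, …, w_{m+1})`, so the count is `∑_t (q - #(range φ_t))`.
By Artin's independence of characters the Frobenius powers `u ↦ u ^ p ^ k`, `k < e`, form a
`K`-basis of `End_{𝔽_p} K`; hence for `m ≥ e` the `K`-linear map `t ↦ φ_t` is onto and every
endomorphism occurs `q ^ (m - e)` times. Finally, the endomorphisms of rank `r` are counted through
their factorizations `K ↠ 𝔽_p^r ↪ K`: there are `∏_{j<r} (q - p^j)^2` factorizations, and a map
of rank `r` has exactly `#GL_r(𝔽_p) = ∏_{j<r} (p^r - p^j)` of them.
-/

open Module Finset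

theorem Fin.card_subtype_cons {α : Type*} [Fintype α] {m : ℕ} (P : α → (Fin m → α) → Prop) :
    Nat.card {w : Fin (m + 1) → α // P (w 0) (Fin.tail w)} =
      ∑ t : Fin m → α, Nat.card {a // P a t} := by
  let e : {x : α × (Fin m → α) // P x.1 x.2} ≃ {w : Fin (m + 1) → α // P (w 0) (Fin.tail w)} :=
    (Fin.consEquiv fun _ => α).subtypeEquiv fun x => by simp [Fin.consEquiv]
  let swap : {x : α × (Fin m → α) // P x.1 x.2} ≃ {x : (Fin m → α) × α // P x.2 x.1} :=
    (Equiv.prodComm _ _).subtypeEquiv fun _ => Iff.rfl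
  rw [← Nat.card_congr e,
    Nat.card_congr (swap.trans (Equiv.subtypeProdEquivSigmaSubtype fun t a => P a t)),
    Nat.card_sigma]

theorem LinearMap.card_forall_add_ne_zero_add_card_range {R M N : Type*} [Ring R]
    [AddCommGroup M] [Module R M] [AddCommGroup N] [Module R N] [Finite N] (A : M →ₗ[R] N) :
    Nat.card {a : N // ∀ u, a + A u ≠ 0} + Nat.card (range A) = Nat.card N := by
  have hcompl : {a : N | ∀ u, a + A u ≠ 0} = (range A : Set N)ᶜ := by
    ext a
    constructor
    · rintro h ⟨u, hu⟩
      exact h (-u) (by rw [map_neg, hu, add_neg_cancel])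
    · intro h u hu
      exact h ⟨-u, by rw [map_neg]; exact neg_eq_of_add_eq_zero_left hu⟩
  have := Set.ncard_add_ncard_compl (range A : Set N)
  rw [← hcompl, add_comm, ← Nat.card_coe_set_eq, ← Nat.card_coe_set_eq] at this
  exact this

theorem AddMonoidHom.sum_comp_of_surjective {G H M : Type*} [AddGroup G] [Fintype G] [AddGroup H]
    [Fintype H] [AddCommMonoid M] (f : G →+ H) (hf : Function.Surjective f) (g : H → M) :
    ∑ x, g (f x) = Nat.card f.ker • ∑ y, g y := by
  classical
  have hfiber (y : H) : #{x | f x = y} = Nat.card f.ker := by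
    rw [AddMonoidHom.card_fiber_eq_of_mem_range f (hf y) ⟨0, map_zero f⟩,
      Nat.card_congr (Equiv.subtypeEquivRight fun x => f.mem_ker), Nat.card_eq_fintype_card,
      Fintype.card_subtype]
  simp_rw [Finset.sum_comp, Finset.image_univ_of_surjective hf, hfiber, Finset.smul_sum]

section Frobenius

variable (K L : Type*) [Field K] [Fintype K] [Field L] [Algebra K L]

noncomputable def linearizedPolynomial (m : ℕ) : (Fin m → L) →ₗ[L] L →ₗ[K] L :=
  Fintype.linearCombination L fun k : Fin m =>
    (FiniteField.frobeniusAlgHom K L ^ (k : ℕ)).toLinearMap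

theorem linearizedPolynomial_apply {m : ℕ} (t : Fin m → L) (u : L) :
    linearizedPolynomial K L m t u = ∑ k, t k * u ^ Fintype.card K ^ (k : ℕ) := by
  simp [linearizedPolynomial, Fintype.linearCombination_apply, FiniteField.coe_frobeniusAlgHom,
    pow_iterate]

variable [Finite L]

theorem span_frobeniusAlgHom_pow_eq_top :
    Submodule.span L (Set.range fun k : Fin (finrank K L) =>
      (FiniteField.frobeniusAlgHom K L ^ (k : ℕ)).toLinearMap) = ⊤ :=
  ((linearIndependent_algHom_toLinearMap K L L).comp _
    (FiniteField.bijective_frobeniusAlgHom_pow K L).injective).span_eq_top_of_card_eq_finrank'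
    (by rw [Fintype.card_fin, finrank_linearMap_self])

theorem linearizedPolynomial_surjective {m : ℕ} (hm : finrank K L ≤ m) :
    Function.Surjective (linearizedPolynomial K L m) := by
  rw [← LinearMap.range_eq_top, linearizedPolynomial, Fintype.range_linearCombination, eq_top_iff,
    ← span_frobeniusAlgHom_pow_eq_top K L]
  refine Submodule.span_mono ?_
  rintro _ ⟨k, rfl⟩
  exact ⟨Fin.castLE hm k, rfl⟩

theorem card_ker_linearizedPolynomial {m : ℕ} (hm : finrank K L ≤ m) :
    Nat.card (LinearMap.ker (linearizedPolynomial K L m)) = Nat.card L ^ (m - finrank K L) := by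
  have hrank := LinearMap.finrank_range_add_finrank_ker (linearizedPolynomial K L m)
  rw [LinearMap.range_eq_top.mpr (linearizedPolynomial_surjective K L hm), finrank_top,
    finrank_linearMap_self, finrank_fin_fun] at hrank
  rw [natCard_eq_pow_finrank (K := L), show finrank L _ = m - finrank K L by omega]

end Frobenius

theorem Module.Basis.injective_iff_linearIndependent_comp {R M N ι : Type*} [Semiring R]
    [AddCommMonoid M] [Module R M] [AddCommMonoid N] [Module R N] [Fintype ι]
    (b : Basis ι R M) (f : M →ₗ[R] N) :
    Function.Injective f ↔ LinearIndependent R (f ∘ b) := by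
  have : Fintype.linearCombination R (f ∘ b) = f ∘ₗ b.equivFun.symm.toLinearMap := by
    ext; simp [Basis.equivFun_symm_apply, Fintype.linearCombination_apply]
  rw [linearIndependent_iff_injective_fintypeLinearCombination, this, LinearMap.coe_comp,
    LinearEquiv.coe_coe, EquivLike.injective_comp]

theorem Nat.cast_prod_range_pow_sub_pow {R : Type*} [CommRing R] {q n r : ℕ} (hq : q ≠ 0)
    (hr : r ≤ n) :
    ((∏ i ∈ range r, (q ^ n - q ^ i) : ℕ) : R) = ∏ i ∈ range r, ((q : R) ^ n - (q : R) ^ i) := by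
  rw [Nat.cast_prod]
  refine prod_congr rfl fun i hi => ?_
  rw [Nat.cast_sub (Nat.pow_le_pow_right (Nat.pos_of_ne_zero hq) (by simp at hi; omega)),
    Nat.cast_pow, Nat.cast_pow]

section RankCount

variable {F V W : Type*} [Field F] [AddCommGroup V] [Module F V] [AddCommGroup W] [Module F W]

theorem LinearMap.surjective_iff_linearIndependent_proj_comp {ι : Type*} [Fintype ι] [DecidableEq ι]
    (s : V →ₗ[F] ι → F) :
    Function.Surjective s ↔ LinearIndependent F fun i => LinearMap.proj i ∘ₗ s := by
  rw [← LinearMap.dualMap_injective_iff,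
    (Pi.basisFun F ι).dualBasis.injective_iff_linearIndependent_comp]
  congr!
  ext
  simp

variable (F V W) in
abbrev RankFactorization (r : ℕ) :=
  {i : (Fin r → F) →ₗ[F] W // Function.Injective i} ×
    {s : V →ₗ[F] Fin r → F // Function.Surjective s}

theorem RankFactorization.range_comp {r : ℕ} (x : RankFactorization F V W r) :
    LinearMap.range (x.1.1 ∘ₗ x.2.1) = LinearMap.range x.1.1 := by
  rw [LinearMap.range_comp, LinearMap.range_eq_top.mpr x.2.2, Submodule.map_top]

noncomputable def RankFactorization.fiberEquiv {r : ℕ} (f : V →ₗ[F] W) :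
    {x : RankFactorization F V W r // x.1.1 ∘ₗ x.2.1 = f} ≃
      ((Fin r → F) ≃ₗ[F] LinearMap.range f) where
  toFun x := (LinearEquiv.ofInjective _ x.1.1.2).trans
    (LinearEquiv.ofEq _ _ (x.2 ▸ x.1.range_comp).symm)
  invFun φ :=
    ⟨(⟨(LinearMap.range f).subtype ∘ₗ φ, (Submodule.injective_subtype _).comp φ.injective⟩,
      ⟨φ.symm ∘ₗ f.rangeRestrict, φ.symm.surjective.comp f.surjective_rangeRestrict⟩),
      by ext; simp⟩
  left_inv x := by
    obtain ⟨⟨i, s⟩, rfl⟩ := x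
    refine Subtype.ext (Prod.ext rfl (Subtype.ext (LinearMap.ext fun v => ?_)))
    exact (LinearEquiv.symm_apply_eq _).mpr (Subtype.ext rfl)
  right_inv φ := by ext; rfl

variable [Fintype F] [FiniteDimensional F V] [FiniteDimensional F W]

theorem card_injective_linearMap (h : finrank F V ≤ finrank F W) :
    Nat.card {f : V →ₗ[F] W // Function.Injective f} =
      ∏ i ∈ range (finrank F V), (Fintype.card F ^ finrank F W - Fintype.card F ^ i) := by
  have : Finite W := Module.finite_of_finite F
  let b := Module.finBasis F V
  rw [Nat.card_congr ((b.constr F).toEquiv.symm.subtypeEquiv (q := fun s => LinearIndependent F s)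
      fun f => b.injective_iff_linearIndependent_comp f),
    card_linearIndependent h]
  exact Fin.prod_univ_eq_prod_range (fun i => Fintype.card F ^ finrank F W - Fintype.card F ^ i) _

theorem card_surjective_linearMap_pi {r : ℕ} (h : r ≤ finrank F V) :
    Nat.card {s : V →ₗ[F] Fin r → F // Function.Surjective s} =
      ∏ i ∈ range r, (Fintype.card F ^ finrank F V - Fintype.card F ^ i) := by
  have : Finite (Dual F V) := Module.finite_of_finite F
  let components : (V →ₗ[F] Fin r → F) ≃ (Fin r → Dual F V) :=
    { toFun s i := LinearMap.proj i ∘ₗ s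
      invFun := LinearMap.pi
      left_inv _ := rfl
      right_inv _ := rfl }
  rw [Nat.card_congr (components.subtypeEquiv (q := fun s => LinearIndependent F s)
      fun s => s.surjective_iff_linearIndependent_proj_comp),
    card_linearIndependent (by rwa [Subspace.dual_finrank_eq]), Subspace.dual_finrank_eq]
  exact Fin.prod_univ_eq_prod_range (fun i => Fintype.card F ^ finrank F V - Fintype.card F ^ i) _

theorem card_linearEquiv (h : finrank F V = finrank F W) :
    Nat.card (V ≃ₗ[F] W) =
      ∏ i ∈ range (finrank F V), (Fintype.card F ^ finrank F W - Fintype.card F ^ i) := by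
  rw [← card_injective_linearMap h.le]
  exact Nat.card_congr
    { toFun f := ⟨f, f.injective⟩
      invFun f := LinearEquiv.ofBijective f.1
        ⟨f.2, (LinearMap.injective_iff_surjective_of_finrank_eq_finrank h).mp f.2⟩
      left_inv _ := by ext; rfl
      right_inv _ := rfl }

theorem card_rankFactorization (r : ℕ) :
    Nat.card (RankFactorization F V W r) =
      Nat.card {f : V →ₗ[F] W // finrank F (LinearMap.range f) = r} *
        ∏ i ∈ range r, (Fintype.card F ^ r - Fintype.card F ^ i) := by
  have : Finite (V →ₗ[F] W) := Module.finite_of_finite F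
  have : Finite ((Fin r → F) →ₗ[F] W) := Module.finite_of_finite F
  have : Finite (V →ₗ[F] Fin r → F) := Module.finite_of_finite F
  have : Fintype {f : V →ₗ[F] W // finrank F (LinearMap.range f) = r} := Fintype.ofFinite _
  let comp (x : RankFactorization F V W r) : {f : V →ₗ[F] W // finrank F (LinearMap.range f) = r} :=
    ⟨x.1.1 ∘ₗ x.2.1, by rw [x.range_comp, LinearMap.finrank_range_of_inj x.1.2, finrank_fin_fun]⟩
  have hfiber (f : {f : V →ₗ[F] W // finrank F (LinearMap.range f) = r}) :
      Nat.card {x // comp x = f} = ∏ i ∈ range r, (Fintype.card F ^ r - Fintype.card F ^ i) := by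
    rw [Nat.card_congr ((Equiv.subtypeEquivRight fun x => Subtype.ext_iff).trans
        (RankFactorization.fiberEquiv f.1)),
      card_linearEquiv (by rw [finrank_fin_fun, f.2]), finrank_fin_fun, f.2]
  rw [← Nat.card_congr (Equiv.sigmaFiberEquiv comp), Nat.card_sigma]
  simp_rw [hfiber]
  rw [sum_const, card_univ, smul_eq_mul, Nat.card_eq_fintype_card]

theorem card_linearMap_finrank_range_eq {r : ℕ} (hV : r ≤ finrank F V) (hW : r ≤ finrank F W) :
    (Nat.card {f : V →ₗ[F] W // finrank F (LinearMap.range f) = r} : ℚ) =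
      (∏ i ∈ range r, ((Fintype.card F : ℚ) ^ finrank F W - (Fintype.card F : ℚ) ^ i)) *
        (∏ i ∈ range r, ((Fintype.card F : ℚ) ^ finrank F V - (Fintype.card F : ℚ) ^ i)) /
          ∏ i ∈ range r, ((Fintype.card F : ℚ) ^ r - (Fintype.card F : ℚ) ^ i) := by
  have hcount := card_rankFactorization (F := F) (V := V) (W := W) r
  rw [Nat.card_prod, card_injective_linearMap (by rwa [finrank_fin_fun]), finrank_fin_fun,
    card_surjective_linearMap_pi hV] at hcount
  have hq : Fintype.card F ≠ 0 := Fintype.card_ne_zero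
  have hGL : ∏ i ∈ range r, (Fintype.card F ^ r - Fintype.card F ^ i) ≠ 0 :=
    prod_ne_zero_iff.mpr fun i hi =>
      Nat.sub_ne_zero_of_lt (Nat.pow_lt_pow_right Fintype.one_lt_card (mem_range.mp hi))
  rw [← Nat.cast_prod_range_pow_sub_pow hq hW, ← Nat.cast_prod_range_pow_sub_pow hq hV,
    ← Nat.cast_prod_range_pow_sub_pow hq le_rfl, eq_div_iff (Nat.cast_ne_zero.mpr hGL)]
  exact_mod_cast hcount.symm

theorem sum_card_sub_card_range_linearMap [Fintype (V →ₗ[F] V)] :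
    ∑ A : V →ₗ[F] V, ((Nat.card V : ℚ) - Nat.card (LinearMap.range A)) =
      ∑ i ∈ Icc 1 (finrank F V),
        ((Fintype.card F : ℚ) ^ finrank F V - (Fintype.card F : ℚ) ^ (finrank F V - i)) *
          (∏ j ∈ range (finrank F V - i),
            ((Fintype.card F : ℚ) ^ finrank F V - (Fintype.card F : ℚ) ^ j) ^ 2) /
          ∏ j ∈ range (finrank F V - i),
            ((Fintype.card F : ℚ) ^ (finrank F V - i) - (Fintype.card F : ℚ) ^ j) := by
  classical
  set n := finrank F V
  set q : ℚ := (Fintype.card F : ℚ) with hq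
  have hcard (U : Submodule F V) : (Nat.card U : ℚ) = q ^ finrank F U := by
    rw [natCard_eq_pow_finrank (K := F), Nat.card_eq_fintype_card, Nat.cast_pow]
  have hcardV : (Nat.card V : ℚ) = q ^ n := by
    rw [natCard_eq_pow_finrank (K := F), Nat.card_eq_fintype_card, Nat.cast_pow]
  obtain ⟨g, hg⟩ : ∃ g : ℕ → ℚ, ∀ r, g r = (q ^ n - q ^ r) * (∏ j ∈ range r, (q ^ n - q ^ j) ^ 2) /
      ∏ j ∈ range r, (q ^ r - q ^ j) := ⟨_, fun _ => rfl⟩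
  have hfiber (r : ℕ) (hr : r ≤ n) :
      ∑ A : V →ₗ[F] V with finrank F (LinearMap.range A) = r,
        ((Nat.card V : ℚ) - Nat.card (LinearMap.range A)) = g r := by
    have hsum : ∑ A : V →ₗ[F] V with finrank F (LinearMap.range A) = r,
        ((Nat.card V : ℚ) - Nat.card (LinearMap.range A)) =
        Nat.card {A : V →ₗ[F] V // finrank F (LinearMap.range A) = r} * (q ^ n - q ^ r) := by
      rw [Nat.card_eq_fintype_card (α := {A : V →ₗ[F] V // _}), Fintype.card_subtype,
        ← nsmul_eq_mul, ← sum_const]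
      refine sum_congr rfl fun A hA => ?_
      rw [← (mem_filter.mp hA).2, hcard, hcardV]
    rw [hsum, card_linearMap_finrank_range_eq hr hr, ← hq, hg, prod_pow]
    ring
  rw [← sum_fiberwise_of_maps_to (t := range (n + 1))
      (g := fun A : V →ₗ[F] V => finrank F (LinearMap.range A))
      fun A _ => mem_range.mpr (Nat.lt_succ_of_le (Submodule.finrank_le _)),
    sum_congr rfl fun r hr => hfiber r (Nat.le_of_lt_succ (mem_range.mp hr)), sum_range_succ,
    hg n, sub_self, zero_mul, zero_div, add_zero, ← Ico_add_one_right_eq_Icc]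
  simp_rw [← hg]
  rw [sum_Ico_reflect g 1 le_rfl, Nat.add_sub_cancel, Nat.sub_self, Nat.Ico_zero_eq_range]

end RankCount

/-- For `m ≥ e`, the number of `w ∈ F_q^{m+1}` such that
`F_w(x) = w_1 + w_2 x + ⋯ + w_{m+1} x^{p^{m-1}}` has no root in `F_q` equals
`q^{m-e} ∑_{i=1}^{e} (p^e - p^{e-i}) ∏_{j<e-i}(p^e-p^j)^2 / ∏_{j<e-i}(p^{e-i}-p^j)`. -/
theorem stmt9 (p e m : ℕ) [Fact p.Prime] (he : 1 ≤ e) (hm : e ≤ m) :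
    (Nat.card {w : Fin (m + 1) → GaloisField p e //
        ∀ u : GaloisField p e, w 0 + ∑ k : Fin m, w k.succ * u ^ p ^ (k : ℕ) ≠ 0} : ℚ) =
      ((p : ℚ) ^ e) ^ (m - e) *
        ∑ i ∈ Finset.Icc 1 e, ((p : ℚ) ^ e - (p : ℚ) ^ (e - i)) *
          (∏ j ∈ Finset.range (e - i), ((p : ℚ) ^ e - p ^ j) ^ 2) /
          (∏ j ∈ Finset.range (e - i), ((p : ℚ) ^ (e - i) - p ^ j)) := by
  have : Fintype (GaloisField p e) := Fintype.ofFinite _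
  have : Finite (GaloisField p e →ₗ[ZMod p] GaloisField p e) := Module.finite_of_finite (ZMod p)
  have : Fintype (GaloisField p e →ₗ[ZMod p] GaloisField p e) := Fintype.ofFinite _
  have hrank : finrank (ZMod p) (GaloisField p e) = e := GaloisField.finrank p (by omega)
  have hm' : finrank (ZMod p) (GaloisField p e) ≤ m := by rw [hrank]; exact hm
  set Φ := linearizedPolynomial (ZMod p) (GaloisField p e) m
  have hsplit : Nat.card {w : Fin (m + 1) → GaloisField p e //
        ∀ u : GaloisField p e, w 0 + ∑ k : Fin m, w k.succ * u ^ p ^ (k : ℕ) ≠ 0} =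
      ∑ t, Nat.card {a // ∀ u, a + Φ t u ≠ 0} := by
    rw [← Fin.card_subtype_cons fun a t => ∀ u, a + Φ t u ≠ 0]
    simp only [Φ, linearizedPolynomial_apply, ZMod.card, Fin.tail]
  calc _ = ∑ t, ((Nat.card (GaloisField p e) : ℚ) - Nat.card (LinearMap.range (Φ t))) := by
        rw [hsplit, Nat.cast_sum]
        refine sum_congr rfl fun t _ => eq_sub_of_add_eq ?_
        exact_mod_cast (Φ t).card_forall_add_ne_zero_add_card_range
    _ = Nat.card (LinearMap.ker Φ) • ∑ A : GaloisField p e →ₗ[ZMod p] GaloisField p e,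
          ((Nat.card (GaloisField p e) : ℚ) - Nat.card (LinearMap.range A)) :=
        Φ.toAddMonoidHom.sum_comp_of_surjective (linearizedPolynomial_surjective _ _ hm')
          fun A => ((Nat.card (GaloisField p e) : ℚ) - Nat.card (LinearMap.range A))
    _ = _ := by
      rw [sum_card_sub_card_range_linearMap, card_ker_linearizedPolynomial _ _ hm', hrank,
        ZMod.card, GaloisField.card p e (by omega), nsmul_eq_mul]
      push_cast
      rfl
end

section
/- If m ≤ e, then the vector (0, 0, …, 0, 1) ∈ F_q^{m+1} is not in the F_q-span of any set of at most m vectors of the form (1, x, x^p, …, x^{p^{m−1}}) with x ∈ F_q. -/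
/-- In the linearized Wenger graph, point `P` is adjacent to line `L` iff
`l_k + p_k = p_1^{p^{k-2}} l_1` for `2 ≤ k ≤ m+1`. -/
def lwAdj (p : ℕ) {F : Type} [Field F] {m : ℕ} (P L : Fin (m + 1) → F) : Prop :=
  ∀ k : Fin m, L k.succ + P k.succ = P 0 ^ p ^ (k : ℕ) * L 0

/-- The linearized Wenger graph `L_m(q)` as a bipartite graph on points ⊕ lines. -/
def lwGraph (p : ℕ) (F : Type) [Field F] (m : ℕ) :
    SimpleGraph ((Fin (m + 1) → F) ⊕ (Fin (m + 1) → F)) :=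
  SimpleGraph.fromRel fun v w => match v, w with
    | Sum.inl P, Sum.inr L => lwAdj p P L
    | _, _ => False


/-- For any `n` elements of a field of characteristic `p`, there is a `p`-linearized
polynomial of degree `p^n` with leading coefficient `1` vanishing on all of them. -/
lemma exists_linpoly (p : ℕ) [Fact p.Prime] (F : Type*) [Field F] [CharP F p] :
    ∀ (n : ℕ) (y : Fin n → F), ∃ a : ℕ → F, a n = 1 ∧ (∀ k, n < k → a k = 0) ∧
      ∀ i, ∑ k ∈ Finset.range (n + 1), a k * y i ^ p ^ k = 0 := by
  intro n
  induction n with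
  | zero =>
    intro y
    exact ⟨fun k => if k = 0 then 1 else 0, by simp, fun k hk => by simp [hk.ne'],
      fun i => i.elim0⟩
  | succ n ih =>
    intro y
    obtain ⟨a, han, hagt, hvan⟩ := ih (y ∘ Fin.castSucc)
    simp only [Function.comp_apply] at hvan
    set w : F := ∑ k ∈ Finset.range (n + 1), a k * y (Fin.last n) ^ p ^ k with hw
    set c : F := w ^ (p - 1) with hc
    refine ⟨fun k => (if k = 0 then 0 else a (k - 1) ^ p) - c * a k, ?_, ?_, ?_⟩
    · simp [han, hagt (n + 1) (by omega)]
    · intro k hk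
      have h1 : a (k - 1) = 0 := hagt _ (by omega)
      have h2 : a k = 0 := hagt _ (by omega)
      simp [h1, h2, zero_pow (Fact.out : p.Prime).ne_zero]
    · have key : ∀ z : F, ∑ k ∈ Finset.range (n + 2),
          ((if k = 0 then 0 else a (k - 1) ^ p) - c * a k) * z ^ p ^ k
          = (∑ k ∈ Finset.range (n + 1), a k * z ^ p ^ k) ^ p
            - c * ∑ k ∈ Finset.range (n + 1), a k * z ^ p ^ k := by
        intro z
        have hsplit : ∀ k, ((if k = 0 then 0 else a (k - 1) ^ p) - c * a k) * z ^ p ^ k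
            = (if k = 0 then 0 else a (k - 1) ^ p) * z ^ p ^ k - c * (a k * z ^ p ^ k) := by
          intro k; ring
        rw [Finset.sum_congr rfl fun k _ => hsplit k, Finset.sum_sub_distrib,
          ← Finset.mul_sum]
        congr 1
        · rw [Finset.sum_range_succ'
            (fun k => (if k = 0 then 0 else a (k - 1) ^ p) * z ^ p ^ k), sum_pow_char]
          rw [if_pos rfl, zero_mul, add_zero]
          refine Finset.sum_congr rfl fun k _ => ?_
          rw [if_neg (Nat.succ_ne_zero k), Nat.add_sub_cancel, mul_pow, ← pow_mul, ← pow_succ]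
        · rw [Finset.sum_range_succ, hagt (n + 1) (by omega), zero_mul, add_zero]
      intro i
      induction i using Fin.lastCases with
      | last =>
        rw [key, ← hw, hc, ← pow_succ, Nat.sub_add_cancel (Fact.out : p.Prime).one_lt.le,
          sub_self]
      | cast j =>
        rw [key, hvan j, zero_pow (Fact.out : p.Prime).ne_zero, mul_zero, sub_zero]

/-- If `m ≤ e`, the vector `(0,…,0,1) ∈ F_q^{m+1}` is not an `F_q`-linear combination of
at most `m` vectors of the form `v(x) = (1, x, x^p, …, x^{p^{m-1}})`. -/
theorem stmt19 (p e m : ℕ) [Fact p.Prime] (hm : 1 ≤ m) (hme : m ≤ e)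
    (s : ℕ) (hs : s ≤ m) (x t : Fin s → GaloisField p e) :
    (fun j : Fin (m + 1) => ∑ i : Fin s,
        t i * (if (j : ℕ) = 0 then 1 else x i ^ p ^ ((j : ℕ) - 1))) ≠
      (fun j : Fin (m + 1) => if (j : ℕ) = m then 1 else 0) := by
  intro h
  have hcoord : ∀ j : Fin (m + 1), (∑ i : Fin s,
      t i * (if (j : ℕ) = 0 then 1 else x i ^ p ^ ((j : ℕ) - 1)))
      = (if (j : ℕ) = m then 1 else 0) := fun j => congrFun h j
  have h0 : ∑ i, t i = 0 := by
    have h' := hcoord ⟨0, by omega⟩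
    simp only [Fin.val_mk, if_neg (show ¬(0 : ℕ) = m by omega)] at h'
    simpa using h'
  have hc : ∀ k, k < m → ∑ i, t i * x i ^ p ^ k = if k = m - 1 then 1 else 0 := by
    intro k hk
    have h' := hcoord ⟨k + 1, by omega⟩
    simp only [Fin.val_mk, if_neg (Nat.succ_ne_zero k), Nat.add_sub_cancel] at h'
    rw [h']
    by_cases hkm : k + 1 = m
    · rw [if_pos hkm, if_pos (by omega)]
    · rw [if_neg hkm, if_neg (by omega)]
  rcases s with _ | n
  · have h1 := hc (m - 1) (by omega)
    simp at h1
  · -- s = n + 1 with n + 1 ≤ m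
    set z := x (Fin.last n) with hz
    obtain ⟨a, han, hagt, hvan⟩ :=
      exists_linpoly p (GaloisField p e) n (fun i => x i.castSucc - z)
    set r := m - 1 - n with hr
    have hnr : n + r = m - 1 := by omega
    have hvan' : ∀ i : Fin (n + 1),
        ∑ k ∈ Finset.range (n + 1), a k * (x i - z) ^ p ^ k = 0 := by
      intro i
      induction i using Fin.lastCases with
      | last =>
        refine Finset.sum_eq_zero fun k _ => ?_
        rw [← hz, sub_self, zero_pow (pow_ne_zero k (Fact.out : p.Prime).ne_zero), mul_zero]
      | cast j => exact hvan j
    have hck : ∀ k, k < m →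
        ∑ i : Fin (n + 1), t i * (x i - z) ^ p ^ k = if k = m - 1 then 1 else 0 := by
      intro k hk
      have hterm : ∀ i, t i * (x i - z) ^ p ^ k
          = t i * x i ^ p ^ k - z ^ p ^ k * t i := by
        intro i; rw [sub_pow_char_pow]; ring
      rw [Finset.sum_congr rfl fun i _ => hterm i, Finset.sum_sub_distrib,
        ← Finset.mul_sum, h0, mul_zero, sub_zero]
      exact hc k hk
    have e1 : ∀ i : Fin (n + 1),
        ∑ k ∈ Finset.range (n + 1), a k ^ p ^ r * (x i - z) ^ p ^ (k + r) = 0 := by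
      intro i
      have h2 := congrArg (· ^ p ^ r) (hvan' i)
      simp only [zero_pow (pow_ne_zero r (Fact.out : p.Prime).ne_zero)] at h2
      rw [sum_pow_char_pow] at h2
      rw [← h2]
      refine Finset.sum_congr rfl fun k _ => ?_
      rw [mul_pow, ← pow_mul, ← pow_add]
    have key : (1 : GaloisField p e) = 0 := by
      calc (1 : GaloisField p e)
          = ∑ k ∈ Finset.range (n + 1), a k ^ p ^ r * (if k + r = m - 1 then 1 else 0) := by
            rw [Finset.sum_eq_single_of_mem n (Finset.self_mem_range_succ n)
              (fun k hk hkn => by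
                rw [if_neg (by have := Finset.mem_range.mp hk; omega), mul_zero])]
            rw [if_pos hnr, han, one_pow, mul_one]
        _ = ∑ k ∈ Finset.range (n + 1), a k ^ p ^ r
              * ∑ i : Fin (n + 1), t i * (x i - z) ^ p ^ (k + r) := by
            refine Finset.sum_congr rfl fun k hk => ?_
            rw [hck (k + r) (by have := Finset.mem_range.mp hk; omega)]
        _ = ∑ i : Fin (n + 1), t i
              * ∑ k ∈ Finset.range (n + 1), a k ^ p ^ r * (x i - z) ^ p ^ (k + r) := by
            simp only [Finset.mul_sum]
            rw [Finset.sum_comm]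
            exact Finset.sum_congr rfl fun i _ => Finset.sum_congr rfl fun k _ => by ring
        _ = 0 := by simp [e1]
    exact one_ne_zero key
end
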